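/- Let H be an N×N skew-symmetric-in-sign matrix with entries H_{pq} ∈ {i,-i} for p≠q, H_{qp}=-H_{pq}, H_{pp}=0, satisfying the regularity condition Σ_{q} H_{pq} = 0 for all p. Define Θ_{q0,q1,q2}(H) = (1/8)(1 - H_{q0q1}H_{q1q2})(1 - H_{q1q2}H_{q2q0})(1 - H_{q2q0}H_{q0q1})(1 - δ_{q0q1}δ_{q1q2}δ_{q2q0}). Then Σ over all triples (q0,q1,q2) of Θ_{q0,q1,q2}(H) equals N(N-1)(N+1)/4. -/

import Mathlib

open Matrix Finset

/-!
Write `a = H q0 q1`, `b = H q1 q2`, `c = H q2 q0` and `δ` for the Kronecker delta. Since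
`H p q * H p q = δ p q - 1`, expanding `(1 - ab)(1 - bc)(1 - ca)` leaves `1`, the indicator that
`q0, q1, q2` are pairwise distinct, and three terms `(2 - δ z x) * H x y * H y z` that are cyclic
rotations of one another. Zero row sums kill `∑ H x y * H y z`, while `∑ H x y * H y x = N(N-1)`,
so summing over all triples gives `8 ∑ Θ = N³ + N(N-1)(N-2) + 3N(N-1) - N = 2N(N² - 1)`.
-/

theorem sum_sum_sum_rotate {ι M : Type*} [Fintype ι] [AddCommMonoid M] (f : ι → ι → ι → M) :
    ∑ a, ∑ b, ∑ c, f b c a = ∑ a, ∑ b, ∑ c, f a b c := by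
  rw [Finset.sum_comm]
  exact sum_congr rfl fun _ _ => Finset.sum_comm

namespace TournamentMatrix

variable {ι R : Type*} [DecidableEq ι] [CommRing R] {H : Matrix ι ι R}

def pathTerm (H : Matrix ι ι R) (x y z : ι) : R :=
  (2 - if z = x then 1 else 0) * (H x y * H y z)

theorem mul_self_apply (hskew : ∀ p q, H q p = -H p q)
    (hpair : ∀ p q, H p q * H q p = if p = q then 0 else 1) (p q : ι) :
    H p q * H p q = (if p = q then 1 else 0) - 1 := by
  have h := hpair p q
  rw [hskew p q] at h
  split_ifs at h ⊢ <;> linear_combination -h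

theorem triangle_product_eq (hskew : ∀ p q, H q p = -H p q)
    (hpair : ∀ p q, H p q * H q p = if p = q then 0 else 1) (q0 q1 q2 : ι) :
    (1 - H q0 q1 * H q1 q2) * (1 - H q1 q2 * H q2 q0) * (1 - H q2 q0 * H q0 q1) *
        (1 - (if q0 = q1 then (1 : R) else 0) * (if q1 = q2 then (1 : R) else 0) *
          (if q2 = q0 then (1 : R) else 0)) =
      1 + (1 - if q0 = q1 then 1 else 0) * (1 - if q1 = q2 then 1 else 0) *
          (1 - if q2 = q0 then 1 else 0)
        - (if q0 = q1 then 1 else 0) * (if q1 = q2 then 1 else 0) * (if q2 = q0 then 1 else 0)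
        - pathTerm H q0 q1 q2 - pathTerm H q1 q2 q0 - pathTerm H q2 q0 q1 := by
  have e01 := mul_self_apply hskew hpair q0 q1
  have e12 := mul_self_apply hskew hpair q1 q2
  have e20 := mul_self_apply hskew hpair q2 q0
  unfold pathTerm
  by_cases hall : q0 = q1 ∧ q1 = q2
  · obtain ⟨rfl, rfl⟩ := hall
    simp only [↓reduceIte] at e01 ⊢
    linear_combination 3 * e01
  · set a := H q0 q1
    set b := H q1 q2
    set c := H q2 q0
    set d01 : R := if q0 = q1 then 1 else 0
    set d12 : R := if q1 = q2 then 1 else 0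
    set d20 : R := if q2 = q0 then 1 else 0
    have hcycle : d01 * d12 * d20 = 0 := by
      rcases not_and_or.mp hall with h | h <;> simp [d01, d12, h]
    rw [hcycle]
    linear_combination c * a * e12 + a * b * e20 + b * c * e01
      - b * b * c * c * e01 - (d01 - 1) * c * c * e12 - (d01 - 1) * (d12 - 1) * e20

variable [Fintype ι]

theorem sum_mul_swap (hpair : ∀ p q, H p q * H q p = if p = q then 0 else 1) :
    ∑ p, ∑ q, H p q * H q p = Fintype.card ι * (Fintype.card ι - 1) := by
  have h (p q : ι) : (if p = q then (0 : R) else 1) = 1 - if p = q then 1 else 0 := by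
    split_ifs <;> simp
  simp [hpair, h, sum_sub_distrib, mul_sub]

theorem sum_pathTerm (hpair : ∀ p q, H p q * H q p = if p = q then 0 else 1)
    (hreg : ∀ p, ∑ q, H p q = 0) :
    ∑ x, ∑ y, ∑ z, pathTerm H x y z = -(Fintype.card ι * (Fintype.card ι - 1)) := by
  have h (x y : ι) : ∑ z, pathTerm H x y z = 2 * ∑ z, H x y * H y z - H x y * H y x := by
    simp [pathTerm, sub_mul, sum_sub_distrib, ← mul_sum, ite_mul]
  simp [h, ← mul_sum, hreg, sum_mul_swap hpair]

theorem sum_distinct_indicator :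
    ∑ q0 : ι, ∑ q1 : ι, ∑ q2 : ι,
      (1 - if q0 = q1 then (1 : R) else 0) * (1 - if q1 = q2 then 1 else 0) *
        (1 - if q2 = q0 then 1 else 0) =
      Fintype.card ι * (Fintype.card ι - 1) * (Fintype.card ι - 2) := by
  simp [sub_mul, mul_sub, mul_ite, sum_sub_distrib, sum_ite_eq, sum_ite_eq', mul_comm]
  ring

theorem sum_diagonal_indicator :
    ∑ q0 : ι, ∑ q1 : ι, ∑ q2 : ι,
      (if q0 = q1 then (1 : R) else 0) * (if q1 = q2 then 1 else 0) * (if q2 = q0 then 1 else 0) =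
      Fintype.card ι := by
  simp [mul_ite, sum_ite_eq']

theorem sum_triangle_product_eq (hskew : ∀ p q, H q p = -H p q)
    (hpair : ∀ p q, H p q * H q p = if p = q then 0 else 1) (hreg : ∀ p, ∑ q, H p q = 0) :
    ∑ q0, ∑ q1, ∑ q2,
      (1 - H q0 q1 * H q1 q2) * (1 - H q1 q2 * H q2 q0) * (1 - H q2 q0 * H q0 q1) *
        (1 - (if q0 = q1 then (1 : R) else 0) * (if q1 = q2 then (1 : R) else 0) *
          (if q2 = q0 then (1 : R) else 0)) =
      2 * Fintype.card ι * (Fintype.card ι - 1) * (Fintype.card ι + 1) := by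
  have h120 : ∑ x, ∑ y, ∑ z, pathTerm H y z x = ∑ x, ∑ y, ∑ z, pathTerm H x y z :=
    sum_sum_sum_rotate _
  have h201 : ∑ x, ∑ y, ∑ z, pathTerm H z x y = ∑ x, ∑ y, ∑ z, pathTerm H x y z :=
    (sum_sum_sum_rotate fun x y z => pathTerm H y z x).trans h120
  simp only [triangle_product_eq hskew hpair, sum_add_distrib, sum_sub_distrib]
  rw [h120, h201, sum_pathTerm hpair hreg, sum_distinct_indicator, sum_diagonal_indicator]
  simp only [sum_const, card_univ, nsmul_eq_mul, mul_one]
  ring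

end TournamentMatrix

/-- For a regular imaginary tournament matrix `H` (entries `±i` off the diagonal,
`H_{qp} = -H_{pq}`, zero diagonal, zero row sums), the sum over all ordered triples
`(q0,q1,q2)` of the indicator
`Θ = (1/8)(1 - H_{q0q1}H_{q1q2})(1 - H_{q1q2}H_{q2q0})(1 - H_{q2q0}H_{q0q1})(1 - δ_{q0q1}δ_{q1q2}δ_{q2q0})`
equals `N(N-1)(N+1)/4`. -/
theorem regular_tournament_indicator_sum (N : ℕ)
    (H : Matrix (Fin N) (Fin N) ℂ)
    (hdiag : ∀ p, H p p = 0)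
    (hskew : ∀ p q, H q p = -H p q)
    (hoff : ∀ p q, p ≠ q → H p q = Complex.I ∨ H p q = -Complex.I)
    (hreg : ∀ p, ∑ q, H p q = 0) :
    ∑ q0 : Fin N, ∑ q1 : Fin N, ∑ q2 : Fin N,
      (1/8 : ℂ) * (1 - H q0 q1 * H q1 q2) * (1 - H q1 q2 * H q2 q0) *
        (1 - H q2 q0 * H q0 q1) *
        (1 - (if q0 = q1 then (1:ℂ) else 0) * (if q1 = q2 then (1:ℂ) else 0) *
          (if q2 = q0 then (1:ℂ) else 0)) =
      (N : ℂ) * ((N : ℂ) - 1) * ((N : ℂ) + 1) / 4 := by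
  have hpair : ∀ p q, H p q * H q p = if p = q then 0 else 1 := by
    intro p q
    split_ifs with hpq
    · simp [hpq, hdiag]
    · rcases hoff p q hpq with h | h <;> simp [hskew p q, h]
  have hsum := TournamentMatrix.sum_triangle_product_eq hskew hpair hreg
  rw [Fintype.card_fin] at hsum
  rw [show (N : ℂ) * (N - 1) * (N + 1) / 4 = 1 / 8 * (2 * N * (N - 1) * (N + 1)) by ring, ← hsum]
  simp only [mul_sum, mul_assoc]
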